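/- arXiv:1801.08464 — 3 statements merged into one kernel-verified Lean document; each statement's English description precedes it below -/
import Mathlib

section
/- If A_ff and S = A_cc − A_cf A_ff⁻¹ A_fc are invertible, then the inverse of A satisfies the multigrid reduction identity A⁻¹ = P (R A P)⁻¹ R + Q (Qᵀ A Q)⁻¹ Qᵀ, where P, R, Q are the ideal interpolation, restriction, and injection operators. -/
/-!
Since `R A = [0 S]` and `Qᵀ A = [A_ff A_fc]`, left-multiplying `A` by the candidate inverse gives
`P [0 I] + Q [I A_ff⁻¹A_fc] = [0 -A_ff⁻¹A_fc; 0 I] + [I A_ff⁻¹A_fc; 0 0] = I`.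
-/

open Matrix

noncomputable section

namespace Matrix

variable {α : Type*} [CommRing α] {n m : Type*} [Fintype n] [Fintype m] [DecidableEq n]
  (A_ff : Matrix n n α) (A_fc : Matrix n m α) (A_cf : Matrix m n α) (A_cc : Matrix m m α)

variable (α n m) in
def fineInjection : Matrix (n ⊕ m) n α :=
  fromRows 1 0

theorem transpose_fineInjection_mul_fromBlocks :
    (fineInjection α n m)ᵀ * fromBlocks A_ff A_fc A_cf A_cc = fromCols A_ff A_fc := by
  simp [fineInjection, transpose_fromRows, fromCols_mul_fromBlocks]

theorem transpose_fineInjection_mul_fromBlocks_mul_fineInjection :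
    (fineInjection α n m)ᵀ * fromBlocks A_ff A_fc A_cf A_cc * fineInjection α n m =
      A_ff := by
  rw [transpose_fineInjection_mul_fromBlocks, fineInjection, fromCols_mul_fromRows]
  simp

variable [DecidableEq m]

def idealInterpolation : Matrix (n ⊕ m) m α :=
  fromRows (-(A_ff⁻¹ * A_fc)) 1

def idealRestriction : Matrix m (n ⊕ m) α :=
  fromCols (-(A_cf * A_ff⁻¹)) 1

variable {A_ff}

theorem idealRestriction_mul_fromBlocks (hff : IsUnit A_ff) :
    idealRestriction A_ff A_cf * fromBlocks A_ff A_fc A_cf A_cc =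
      fromCols 0 (A_cc - A_cf * A_ff⁻¹ * A_fc) := by
  have hcancel := nonsing_inv_mul_cancel_right A_ff A_cf ((isUnit_iff_isUnit_det _).mp hff)
  simp [idealRestriction, fromCols_mul_fromBlocks, hcancel, sub_eq_neg_add]

theorem idealRestriction_mul_fromBlocks_mul_idealInterpolation (hff : IsUnit A_ff) :
    idealRestriction A_ff A_cf * fromBlocks A_ff A_fc A_cf A_cc * idealInterpolation A_ff A_fc =
      A_cc - A_cf * A_ff⁻¹ * A_fc := by
  simp [idealRestriction_mul_fromBlocks _ _ _ hff, idealInterpolation, fromCols_mul_fromRows]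

theorem inv_fromBlocks_eq_idealInterpolation_add_fineInjection (hff : IsUnit A_ff)
    (hS : IsUnit (A_cc - A_cf * A_ff⁻¹ * A_fc)) :
    (fromBlocks A_ff A_fc A_cf A_cc)⁻¹ =
      idealInterpolation A_ff A_fc * (A_cc - A_cf * A_ff⁻¹ * A_fc)⁻¹ *
          idealRestriction A_ff A_cf +
        fineInjection α n m * A_ff⁻¹ * (fineInjection α n m)ᵀ := by
  have hS' := (isUnit_iff_isUnit_det _).mp hS
  have hff' := (isUnit_iff_isUnit_det _).mp hff
  have hcoarse : idealInterpolation A_ff A_fc * (A_cc - A_cf * A_ff⁻¹ * A_fc)⁻¹ *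
      idealRestriction A_ff A_cf * fromBlocks A_ff A_fc A_cf A_cc =
        idealInterpolation A_ff A_fc * fromCols 0 (1 : Matrix m m α) :=
    calc _ = idealInterpolation A_ff A_fc * ((A_cc - A_cf * A_ff⁻¹ * A_fc)⁻¹ *
          (idealRestriction A_ff A_cf * fromBlocks A_ff A_fc A_cf A_cc)) := by
          simp only [Matrix.mul_assoc]
      _ = _ := by
          rw [idealRestriction_mul_fromBlocks _ _ _ hff, mul_fromCols, Matrix.mul_zero,
            nonsing_inv_mul _ hS']
  have hfine : fineInjection α n m * A_ff⁻¹ * (fineInjection α n m)ᵀ *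
      fromBlocks A_ff A_fc A_cf A_cc =
        fineInjection α n m * fromCols (1 : Matrix n n α) (A_ff⁻¹ * A_fc) :=
    calc _ = fineInjection α n m * (A_ff⁻¹ *
          ((fineInjection α n m)ᵀ * fromBlocks A_ff A_fc A_cf A_cc)) := by
          simp only [Matrix.mul_assoc]
      _ = _ := by
          rw [transpose_fineInjection_mul_fromBlocks, mul_fromCols, nonsing_inv_mul _ hff']
  apply inv_eq_left_inv
  rw [add_mul, hcoarse, hfine, idealInterpolation, fineInjection, fromRows_mul_fromCols,
    fromRows_mul_fromCols, fromBlocks_add, ← fromBlocks_one]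
  simp

end Matrix

end

theorem mgr_additive_identity {n m : Type*} [Fintype n] [Fintype m] [DecidableEq n] [DecidableEq m]
    (A_ff : Matrix n n ℝ) (A_fc : Matrix n m ℝ) (A_cf : Matrix m n ℝ) (A_cc : Matrix m m ℝ)
    (hff : IsUnit A_ff) (hS : IsUnit (A_cc - A_cf * A_ff⁻¹ * A_fc)) :
    let A := fromBlocks A_ff A_fc A_cf A_cc
    let P := fromRows (-(A_ff⁻¹ * A_fc)) (1 : Matrix m m ℝ)
    let R := fromCols (-(A_cf * A_ff⁻¹)) (1 : Matrix m m ℝ)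
    let Q := fromRows (1 : Matrix n n ℝ) (0 : Matrix m n ℝ)
    A⁻¹ = P * (R * A * P)⁻¹ * R + Q * (Qᵀ * A * Q)⁻¹ * Qᵀ := by
  intro A P R Q
  have hRAP : R * A * P = A_cc - A_cf * A_ff⁻¹ * A_fc :=
    idealRestriction_mul_fromBlocks_mul_idealInterpolation A_fc A_cf A_cc hff
  have hQAQ : Qᵀ * A * Q = A_ff :=
    transpose_fineInjection_mul_fromBlocks_mul_fineInjection A_ff A_fc A_cf A_cc
  rw [hRAP, hQAQ]
  exact inv_fromBlocks_eq_idealInterpolation_add_fineInjection A_fc A_cf A_cc hff hS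
end

section
/- Under the same assumptions, the two-level multiplicative multigrid identity holds: (I − P(RAP)⁻¹RA)(I − Q(QᵀAQ)⁻¹QᵀA) = 0, and likewise with the two factors in the opposite order. -/
/-!
The coarse and fine corrections `X = P (RAP)⁻¹ R A` and `Y = Q (QᵀAQ)⁻¹ Qᵀ A` satisfy
`X + Y = 1`, which is the additive identity `A⁻¹ = P S⁻¹ R + Q A_ff⁻¹ Qᵀ` multiplied by `A`.
Hence `1 - X = Y` and `1 - Y = X`, so the two multiplicative error propagators are `Y X` and
`X Y`, and both vanish because the coarse spaces are `A`-orthogonal: `QᵀAP = 0` and `RAQ = 0`.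
-/

open Matrix

theorem sub_mul_sub_eq_zero_of_add_eq_one {α : Type*} [Ring α] {x y : α} (hxy : x + y = 1)
    (hyx : y * x = 0) : (1 - x) * (1 - y) = 0 := by
  rw [← hxy, add_sub_cancel_left, add_sub_cancel_right, hyx]

theorem galerkin_mul_galerkin_eq_zero {ι κ μ α : Type*} [Fintype ι] [Fintype κ]
    [Fintype μ] [NonUnitalSemiring α] {A : Matrix ι ι α} {P : Matrix ι κ α} {M : Matrix κ κ α}
    {R : Matrix κ ι α} {Q : Matrix ι μ α} {N : Matrix μ μ α} {Qt : Matrix μ ι α}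
    (h : R * A * Q = 0) : P * M * R * A * (Q * N * Qt * A) = 0 := by
  calc P * M * R * A * (Q * N * Qt * A) = P * M * (R * A * Q) * N * Qt * A := by
        simp only [Matrix.mul_assoc]
    _ = 0 := by rw [h]; simp

namespace TwoLevel

variable {n m K : Type*} [Fintype n] [Fintype m] [DecidableEq n] [CommRing K]
  (A_ff : Matrix n n K) (A_fc : Matrix n m K) (A_cf : Matrix m n K) (A_cc : Matrix m m K)

noncomputable def schurComplement : Matrix m m K := A_cc - A_cf * A_ff⁻¹ * A_fc

noncomputable def interpolation [DecidableEq m] : Matrix (n ⊕ m) m K :=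
  fromRows (-(A_ff⁻¹ * A_fc)) 1

noncomputable def restriction [DecidableEq m] : Matrix m (n ⊕ m) K :=
  fromCols (-(A_cf * A_ff⁻¹)) 1

variable (n m K) in
def injection : Matrix (n ⊕ m) n K := fromRows 1 0

theorem injection_transpose_mul_fromBlocks :
    (injection n m K)ᵀ * fromBlocks A_ff A_fc A_cf A_cc = fromCols A_ff A_fc := by
  simp [injection, transpose_fromRows, fromCols_mul_fromBlocks]

theorem injection_transpose_mul_mul_injection :
    (injection n m K)ᵀ * fromBlocks A_ff A_fc A_cf A_cc * injection n m K = A_ff := by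
  rw [injection_transpose_mul_fromBlocks, injection, fromCols_mul_fromRows]
  simp

variable {A_ff}

theorem restriction_mul_fromBlocks [DecidableEq m] (hff : IsUnit A_ff) :
    restriction A_ff A_cf * fromBlocks A_ff A_fc A_cf A_cc =
      fromCols 0 (schurComplement A_ff A_fc A_cf A_cc) := by
  have hinv := nonsing_inv_mul A_ff ((isUnit_iff_isUnit_det _).mp hff)
  rw [restriction, schurComplement, fromCols_mul_fromBlocks]
  congr 1
  · simp [Matrix.mul_assoc, hinv]
  · simp [Matrix.mul_assoc, neg_add_eq_sub]

theorem restriction_mul_mul_interpolation [DecidableEq m] (hff : IsUnit A_ff) :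
    restriction A_ff A_cf * fromBlocks A_ff A_fc A_cf A_cc * interpolation A_ff A_fc =
      schurComplement A_ff A_fc A_cf A_cc := by
  simp [restriction_mul_fromBlocks A_fc A_cf A_cc hff, interpolation, fromCols_mul_fromRows]

theorem restriction_mul_mul_injection [DecidableEq m] (hff : IsUnit A_ff) :
    restriction A_ff A_cf * fromBlocks A_ff A_fc A_cf A_cc * injection n m K = 0 := by
  simp [restriction_mul_fromBlocks A_fc A_cf A_cc hff, injection, fromCols_mul_fromRows]

theorem injection_transpose_mul_mul_interpolation [DecidableEq m] (hff : IsUnit A_ff) :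
    (injection n m K)ᵀ * fromBlocks A_ff A_fc A_cf A_cc * interpolation A_ff A_fc = 0 := by
  have hinv := mul_nonsing_inv A_ff ((isUnit_iff_isUnit_det _).mp hff)
  simp [injection_transpose_mul_fromBlocks, interpolation, fromCols_mul_fromRows,
    ← Matrix.mul_assoc, hinv]

theorem interpolation_mul_inv_mul_restriction_add [DecidableEq m] (hff : IsUnit A_ff)
    (hS : IsUnit (schurComplement A_ff A_fc A_cf A_cc)) :
    interpolation A_ff A_fc * (schurComplement A_ff A_fc A_cf A_cc)⁻¹ * restriction A_ff A_cf *
        fromBlocks A_ff A_fc A_cf A_cc +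
      injection n m K * A_ff⁻¹ * (injection n m K)ᵀ * fromBlocks A_ff A_fc A_cf A_cc = 1 := by
  have hSinv := nonsing_inv_mul _ ((isUnit_iff_isUnit_det _).mp hS)
  have hinv := nonsing_inv_mul A_ff ((isUnit_iff_isUnit_det _).mp hff)
  have hcoarse : interpolation A_ff A_fc * (schurComplement A_ff A_fc A_cf A_cc)⁻¹ *
      restriction A_ff A_cf * fromBlocks A_ff A_fc A_cf A_cc =
        fromBlocks 0 (-(A_ff⁻¹ * A_fc)) 0 1 := by
    rw [Matrix.mul_assoc, restriction_mul_fromBlocks A_fc A_cf A_cc hff, Matrix.mul_assoc,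
      mul_fromCols, hSinv, interpolation, fromRows_mul_fromCols]
    simp
  have hfine : injection n m K * A_ff⁻¹ * (injection n m K)ᵀ * fromBlocks A_ff A_fc A_cf A_cc =
      fromBlocks 1 (A_ff⁻¹ * A_fc) 0 0 := by
    rw [Matrix.mul_assoc, injection_transpose_mul_fromBlocks, Matrix.mul_assoc, mul_fromCols,
      hinv, injection, fromRows_mul_fromCols]
    simp
  rw [hcoarse, hfine, fromBlocks_add]
  simp [← fromBlocks_one]

end TwoLevel

open TwoLevel in
theorem mgr_multiplicative_identity {n m : Type*} [Fintype n] [Fintype m] [DecidableEq n]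
    [DecidableEq m]
    (A_ff : Matrix n n ℝ) (A_fc : Matrix n m ℝ) (A_cf : Matrix m n ℝ) (A_cc : Matrix m m ℝ)
    (hff : IsUnit A_ff) (hS : IsUnit (A_cc - A_cf * A_ff⁻¹ * A_fc)) :
    let A := fromBlocks A_ff A_fc A_cf A_cc
    let P := fromRows (-(A_ff⁻¹ * A_fc)) (1 : Matrix m m ℝ)
    let R := fromCols (-(A_cf * A_ff⁻¹)) (1 : Matrix m m ℝ)
    let Q := fromRows (1 : Matrix n n ℝ) (0 : Matrix m n ℝ)
    (1 - P * (R * A * P)⁻¹ * R * A) * (1 - Q * (Qᵀ * A * Q)⁻¹ * Qᵀ * A) = 0 ∧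
    (1 - Q * (Qᵀ * A * Q)⁻¹ * Qᵀ * A) * (1 - P * (R * A * P)⁻¹ * R * A) = 0 := by
  intro A P R Q
  have hRAP : R * A * P = schurComplement A_ff A_fc A_cf A_cc :=
    restriction_mul_mul_interpolation A_fc A_cf A_cc hff
  have hQAQ : Qᵀ * A * Q = A_ff := injection_transpose_mul_mul_injection A_ff A_fc A_cf A_cc
  have hsum : P * (R * A * P)⁻¹ * R * A + Q * (Qᵀ * A * Q)⁻¹ * Qᵀ * A = 1 := by
    rw [hRAP, hQAQ]
    exact interpolation_mul_inv_mul_restriction_add A_fc A_cf A_cc hff hS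
  have hRAQ : R * A * Q = 0 := restriction_mul_mul_injection A_fc A_cf A_cc hff
  have hQAP : Qᵀ * A * P = 0 := injection_transpose_mul_mul_interpolation A_fc A_cf A_cc hff
  exact ⟨sub_mul_sub_eq_zero_of_add_eq_one hsum (galerkin_mul_galerkin_eq_zero hQAP),
    sub_mul_sub_eq_zero_of_add_eq_one ((add_comm _ _).trans hsum)
      (galerkin_mul_galerkin_eq_zero hRAQ)⟩
end

section
/- Let M_f and M_c be invertible matrices and define the error propagator E = (I − P M_c⁻¹ R A)(I − M_f⁻¹ A) with P, R, Q ideal. If M_c = RAP and M_f⁻¹ = Q(QᵀAQ)⁻¹Qᵀ, then E = 0; hence the corresponding preconditioner M_MGR satisfies M_MGR⁻¹A = I, i.e., M_MGR = A. -/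
/-! With the ideal transfer operators, `R A = [0 | S]` for the Schur complement `S`, so the
coarse operator `R A P` is `S` itself and the coarse-grid correction `I - P S⁻¹ R A` is the
projection `[[I, A_ff⁻¹ A_fc], [0, 0]]`. Exact F-relaxation `I - Q A_ff⁻¹ Qᵀ A` is the
complementary projection `[[0, -A_ff⁻¹ A_fc], [0, I]]`, and the two multiply to zero. -/

open Matrix

section IdealTransfer

variable {n m K : Type*} [CommRing K]

lemma fromCols_mul_fromBlocks_eq_schur [Fintype n] [DecidableEq n] [Fintype m] [DecidableEq m]
    {A_ff : Matrix n n K} (hff : IsUnit A_ff) (A_fc : Matrix n m K) (A_cf : Matrix m n K)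
    (A_cc : Matrix m m K) :
    fromCols (-(A_cf * A_ff⁻¹)) (1 : Matrix m m K) * fromBlocks A_ff A_fc A_cf A_cc =
      fromCols 0 (A_cc - A_cf * A_ff⁻¹ * A_fc) := by
  rw [fromCols_mul_fromBlocks, Matrix.neg_mul, Matrix.mul_assoc,
    nonsing_inv_mul _ ((isUnit_iff_isUnit_det _).mp hff)]
  simp only [Matrix.mul_one, Matrix.one_mul, Matrix.neg_mul, neg_add_cancel, neg_add_eq_sub]

lemma fromCols_mul_fromBlocks_mul_fromRows_eq_schur [Fintype n] [DecidableEq n] [Fintype m]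
    [DecidableEq m] {A_ff : Matrix n n K} (hff : IsUnit A_ff) (A_fc : Matrix n m K)
    (A_cf : Matrix m n K) (A_cc : Matrix m m K) :
    fromCols (-(A_cf * A_ff⁻¹)) (1 : Matrix m m K) * fromBlocks A_ff A_fc A_cf A_cc *
        fromRows (-(A_ff⁻¹ * A_fc)) (1 : Matrix m m K) = A_cc - A_cf * A_ff⁻¹ * A_fc := by
  rw [fromCols_mul_fromBlocks_eq_schur hff, fromCols_mul_fromRows, Matrix.zero_mul,
    Matrix.mul_one, zero_add]

lemma transpose_fromRows_one_zero_mul_fromBlocks_mul [Fintype n] [DecidableEq n] [Fintype m]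
    (A : Matrix n n K) (B : Matrix n m K) (C : Matrix m n K) (D : Matrix m m K) :
    (fromRows (1 : Matrix n n K) (0 : Matrix m n K))ᵀ * fromBlocks A B C D *
        fromRows (1 : Matrix n n K) (0 : Matrix m n K) = A := by
  rw [transpose_fromRows, transpose_one, transpose_zero, fromCols_mul_fromBlocks,
    fromCols_mul_fromRows]
  simp only [Matrix.one_mul, Matrix.zero_mul, add_zero, Matrix.mul_one, Matrix.mul_zero]

lemma fromRows_one_zero_mul_mul_transpose [Fintype n] [DecidableEq n] (X : Matrix n n K) :
    fromRows (1 : Matrix n n K) (0 : Matrix m n K) * X *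
        (fromRows (1 : Matrix n n K) (0 : Matrix m n K))ᵀ = fromBlocks X 0 0 0 := by
  rw [transpose_fromRows, transpose_one, transpose_zero, fromRows_mul, fromRows_mul_fromCols]
  simp only [Matrix.one_mul, Matrix.zero_mul, Matrix.mul_one, Matrix.mul_zero]

lemma one_sub_fromBlocks_inv_mul_fromBlocks [Fintype n] [DecidableEq n] [Fintype m]
    [DecidableEq m] {A_ff : Matrix n n K} (hff : IsUnit A_ff) (A_fc : Matrix n m K)
    (A_cf : Matrix m n K) (A_cc : Matrix m m K) :
    1 - fromBlocks A_ff⁻¹ 0 0 0 * fromBlocks A_ff A_fc A_cf A_cc =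
      fromBlocks 0 (-(A_ff⁻¹ * A_fc)) 0 1 := by
  rw [sub_eq_iff_eq_add, fromBlocks_multiply, fromBlocks_add,
    nonsing_inv_mul _ ((isUnit_iff_isUnit_det _).mp hff), ← fromBlocks_one]
  simp only [Matrix.zero_mul, add_zero, zero_add, neg_add_cancel]

lemma one_sub_fromRows_mul_inv_mul_fromCols_zero [DecidableEq n] [Fintype m] [DecidableEq m]
    {S : Matrix m m K} (hS : IsUnit S) (X : Matrix n m K) :
    1 - fromRows (-X) (1 : Matrix m m K) * S⁻¹ * fromCols (0 : Matrix m n K) S =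
      fromBlocks 1 X 0 0 := by
  rw [sub_eq_iff_eq_add, fromRows_mul, fromRows_mul_fromCols, fromBlocks_add, ← fromBlocks_one]
  simp [Matrix.mul_assoc, nonsing_inv_mul _ ((isUnit_iff_isUnit_det _).mp hS)]

lemma fromBlocks_one_mul_fromBlocks_zero_neg [Fintype n] [DecidableEq n] [Fintype m]
    [DecidableEq m] (X : Matrix n m K) :
    fromBlocks 1 X (0 : Matrix m n K) 0 * fromBlocks (0 : Matrix n n K) (-X) 0 (1 : Matrix m m K) =
      0 := by
  rw [fromBlocks_multiply, ← fromBlocks_zero]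
  simp only [Matrix.mul_zero, Matrix.mul_one, Matrix.one_mul, Matrix.mul_neg, Matrix.zero_mul,
    add_zero, neg_add_cancel, neg_zero]

end IdealTransfer

theorem mgr_ideal_preconditioner {n m : Type*} [Fintype n] [Fintype m] [DecidableEq n]
    [DecidableEq m]
    (A_ff : Matrix n n ℝ) (A_fc : Matrix n m ℝ) (A_cf : Matrix m n ℝ) (A_cc : Matrix m m ℝ)
    (hff : IsUnit A_ff) (hS : IsUnit (A_cc - A_cf * A_ff⁻¹ * A_fc))
    (M_c : Matrix m m ℝ) (Mf_inv : Matrix (n ⊕ m) (n ⊕ m) ℝ)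
    (hMc : M_c = fromCols (-(A_cf * A_ff⁻¹)) (1 : Matrix m m ℝ) *
        fromBlocks A_ff A_fc A_cf A_cc * fromRows (-(A_ff⁻¹ * A_fc)) (1 : Matrix m m ℝ))
    (hMf : Mf_inv = fromRows (1 : Matrix n n ℝ) (0 : Matrix m n ℝ) *
        ((fromRows (1 : Matrix n n ℝ) (0 : Matrix m n ℝ))ᵀ * fromBlocks A_ff A_fc A_cf A_cc *
          fromRows (1 : Matrix n n ℝ) (0 : Matrix m n ℝ))⁻¹ *
        (fromRows (1 : Matrix n n ℝ) (0 : Matrix m n ℝ))ᵀ) :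
    let A := fromBlocks A_ff A_fc A_cf A_cc
    let P := fromRows (-(A_ff⁻¹ * A_fc)) (1 : Matrix m m ℝ)
    let R := fromCols (-(A_cf * A_ff⁻¹)) (1 : Matrix m m ℝ)
    (1 - P * M_c⁻¹ * R * A) * (1 - Mf_inv * A) = 0 ∧
    ∀ M_MGR : Matrix (n ⊕ m) (n ⊕ m) ℝ, IsUnit M_MGR →
      1 - M_MGR⁻¹ * A = (1 - P * M_c⁻¹ * R * A) * (1 - Mf_inv * A) →
      M_MGR⁻¹ * A = 1 ∧ M_MGR = A := by
  intro A P R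
  have hMc_schur : M_c = A_cc - A_cf * A_ff⁻¹ * A_fc :=
    hMc.trans (fromCols_mul_fromBlocks_mul_fromRows_eq_schur hff A_fc A_cf A_cc)
  have hMf_block : Mf_inv = fromBlocks A_ff⁻¹ 0 0 0 := by
    rw [hMf, transpose_fromRows_one_zero_mul_fromBlocks_mul, fromRows_one_zero_mul_mul_transpose]
  have hE_coarse : 1 - P * M_c⁻¹ * R * A = fromBlocks 1 (A_ff⁻¹ * A_fc) 0 0 := by
    rw [Matrix.mul_assoc _ R, fromCols_mul_fromBlocks_eq_schur hff, hMc_schur]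
    exact one_sub_fromRows_mul_inv_mul_fromCols_zero hS _
  have hE_zero : (1 - P * M_c⁻¹ * R * A) * (1 - Mf_inv * A) = 0 := by
    rw [hE_coarse, hMf_block, one_sub_fromBlocks_inv_mul_fromBlocks hff]
    exact fromBlocks_one_mul_fromBlocks_zero_neg _
  refine ⟨hE_zero, fun M hM hE => ?_⟩
  have hMA : M⁻¹ * A = 1 := (sub_eq_zero.mp (hE.trans hE_zero)).symm
  refine ⟨hMA, ?_⟩
  calc M = M * (M⁻¹ * A) := by rw [hMA, Matrix.mul_one]
    _ = A := mul_nonsing_inv_cancel_left M A ((isUnit_iff_isUnit_det M).mp hM)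
end
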